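/- arXiv:2107.12890 — 2 statements merged into one kernel-verified Lean document; each statement's English description precedes it below -/
import Mathlib

section
/- Suppose Ŵ is positive definite and factor Ŵ = RᵀR with R an invertible N×N matrix. Define the pseudo-data X* := R X and y* := (Rᵀ)⁻¹ ŷ. Then there exists a constant c ∈ ℝ, not depending on δ, such that L(δ) = ‖y* − X* δ‖² + c for every δ ∈ ℝ^p; explicitly, one may take c = ∫ y(s)ᵀ W(s) y(s) dμ(s) − ‖y*‖². (This is the decomposition underlying the paper's Theorem 1.) -/
open MeasureTheory Matrix

/-- Decomposition underlying Theorem 1: with Ŵ = RᵀR positive definite, X* = RX, y* = (Rᵀ)⁻¹ŷ, the loss satisfies L(δ) = ‖y* − X*δ‖² + c with c = ∫ yᵀWy dμ − ‖y*‖². - -/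
theorem stmt_3
    {S : Type*} [MeasurableSpace S] (μ : Measure S) [IsProbabilityMeasure μ]
    {N p : ℕ}
    (W : S → Matrix (Fin N) (Fin N) ℝ) (y : S → (Fin N → ℝ))
    (hWpsd : ∀ᵐ s ∂μ, (W s).PosSemidef)
    (hWint : ∀ i j, Integrable (fun s => W s i j) μ)
    (hWy : ∀ i, Integrable (fun s => (W s *ᵥ y s) i) μ)
    (hyWy : Integrable (fun s => y s ⬝ᵥ (W s *ᵥ y s)) μ)
    (X : Matrix (Fin N) (Fin p) ℝ)
    (What : Matrix (Fin N) (Fin N) ℝ)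
    (hWhat : ∀ i j, What i j = ∫ s, W s i j ∂μ)
    (yhat : Fin N → ℝ)
    (hyhat : ∀ i, yhat i = ∫ s, (W s *ᵥ y s) i ∂μ)
    (L : (Fin p → ℝ) → ℝ)
    (hL : ∀ δ : Fin p → ℝ, L δ = ∫ s, (y s - X *ᵥ δ) ⬝ᵥ (W s *ᵥ (y s - X *ᵥ δ)) ∂μ)    (hWpd : What.PosDef)
    (R : Matrix (Fin N) (Fin N) ℝ)
    (hRunit : IsUnit R.det)
    (hRfac : Rᵀ * R = What)
    (Xstar : Matrix (Fin N) (Fin p) ℝ) (hXstar : Xstar = R * X)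
    (ystar : Fin N → ℝ) (hystar : ystar = (Rᵀ)⁻¹ *ᵥ yhat) :
    ∃ c : ℝ,
      (∀ δ : Fin p → ℝ,
        L δ = (ystar - Xstar *ᵥ δ) ⬝ᵥ (ystar - Xstar *ᵥ δ) + c) ∧
      c = (∫ s, y s ⬝ᵥ (W s *ᵥ y s) ∂μ) - ystar ⬝ᵥ ystar := by
  refine ⟨(∫ s, y s ⬝ᵥ (W s *ᵥ y s) ∂μ) - ystar ⬝ᵥ ystar, ?_, rfl⟩
  intro δ
  set v : Fin N → ℝ := X *ᵥ δ with hv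
  -- key vector identities
  have hRTy : Rᵀ *ᵥ ystar = yhat := by
    rw [hystar, Matrix.mulVec_mulVec, Matrix.mul_nonsing_inv, Matrix.one_mulVec]
    simpa using hRunit
  -- integral of cross term
  have hI2 : ∫ s, v ⬝ᵥ (W s *ᵥ y s) ∂μ = v ⬝ᵥ yhat := by
    have : ∀ s, v ⬝ᵥ (W s *ᵥ y s) = ∑ i, v i * (W s *ᵥ y s) i := fun s => rfl
    simp only [this]
    rw [integral_finset_sum _ (fun i _ => (hWy i).const_mul (v i))]
    refine Finset.sum_congr rfl fun i _ => ?_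
    rw [integral_const_mul, ← hyhat i]
  -- integral of quadratic term
  have hI3 : ∫ s, v ⬝ᵥ (W s *ᵥ v) ∂μ = v ⬝ᵥ (What *ᵥ v) := by
    have h1 : ∀ s, v ⬝ᵥ (W s *ᵥ v) = ∑ i, ∑ j, v i * (W s i j * v j) := by
      intro s
      simp [dotProduct, Matrix.mulVec, Finset.mul_sum]
    simp only [h1]
    have h2 : v ⬝ᵥ (What *ᵥ v) = ∑ i, ∑ j, v i * (What i j * v j) := by
      simp [dotProduct, Matrix.mulVec, Finset.mul_sum]
    rw [h2, integral_finset_sum _ (fun i _ => integrable_finset_sum _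
      (fun j _ => ((hWint i j).mul_const (v j)).const_mul (v i)))]
    refine Finset.sum_congr rfl fun i _ => ?_
    rw [integral_finset_sum _ (fun j _ => ((hWint i j).mul_const (v j)).const_mul (v i))]
    refine Finset.sum_congr rfl fun j _ => ?_
    rw [integral_const_mul, integral_mul_const, hWhat i j]
  -- pointwise expansion a.e.
  have hptw : ∀ᵐ s ∂μ, (y s - v) ⬝ᵥ (W s *ᵥ (y s - v)) =
      y s ⬝ᵥ (W s *ᵥ y s) - 2 * (v ⬝ᵥ (W s *ᵥ y s)) + v ⬝ᵥ (W s *ᵥ v) := by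
    filter_upwards [hWpsd] with s hs
    have hsym : (W s)ᵀ = W s := hs.1
    have hcross : y s ⬝ᵥ (W s *ᵥ v) = v ⬝ᵥ (W s *ᵥ y s) := by
      rw [Matrix.dotProduct_mulVec, ← Matrix.mulVec_transpose, hsym,
        dotProduct_comm]
    rw [Matrix.mulVec_sub, sub_dotProduct, dotProduct_sub,
      dotProduct_sub, hcross]
    ring
  -- compute L δ
  have hLδ : L δ = (∫ s, y s ⬝ᵥ (W s *ᵥ y s) ∂μ) - 2 * (v ⬝ᵥ yhat) + v ⬝ᵥ (What *ᵥ v) := by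
    rw [hL δ, integral_congr_ae hptw]
    have hi2 : Integrable (fun s => v ⬝ᵥ (W s *ᵥ y s)) μ := by
      have : (fun s => v ⬝ᵥ (W s *ᵥ y s)) = fun s => ∑ i, v i * (W s *ᵥ y s) i := rfl
      rw [this]
      exact integrable_finset_sum _ (fun i _ => (hWy i).const_mul (v i))
    have hi3 : Integrable (fun s => v ⬝ᵥ (W s *ᵥ v)) μ := by
      have h1 : (fun s => v ⬝ᵥ (W s *ᵥ v)) = fun s => ∑ i, ∑ j, v i * (W s i j * v j) := by
        funext s; simp [dotProduct, Matrix.mulVec, Finset.mul_sum]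
      rw [h1]
      exact integrable_finset_sum _ (fun i _ => integrable_finset_sum _
        (fun j _ => ((hWint i j).mul_const (v j)).const_mul (v i)))
    have h12 : Integrable (fun s => y s ⬝ᵥ (W s *ᵥ y s) - 2 * (v ⬝ᵥ (W s *ᵥ y s))) μ :=
      hyWy.sub (hi2.const_mul 2)
    rw [integral_add h12 hi3, integral_sub hyWy (hi2.const_mul 2),
      integral_const_mul, hI2, hI3]
  -- compute the RHS quadratic form
  have hRHS : (ystar - Xstar *ᵥ δ) ⬝ᵥ (ystar - Xstar *ᵥ δ) =
      ystar ⬝ᵥ ystar - 2 * (v ⬝ᵥ yhat) + v ⬝ᵥ (What *ᵥ v) := by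
    have hXv : Xstar *ᵥ δ = R *ᵥ v := by
      rw [hXstar, hv, Matrix.mulVec_mulVec]
    have hcross : ystar ⬝ᵥ (R *ᵥ v) = v ⬝ᵥ yhat := by
      rw [Matrix.dotProduct_mulVec, ← Matrix.mulVec_transpose, hRTy,
        dotProduct_comm]
    have hquad : (R *ᵥ v) ⬝ᵥ (R *ᵥ v) = v ⬝ᵥ (What *ᵥ v) := by
      rw [Matrix.dotProduct_mulVec, ← Matrix.mulVec_transpose,
        Matrix.mulVec_mulVec, hRfac, dotProduct_comm]
    have hcross' : (R *ᵥ v) ⬝ᵥ ystar = v ⬝ᵥ yhat := by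
      rw [dotProduct_comm]; exact hcross
    rw [hXv, sub_dotProduct, dotProduct_sub, dotProduct_sub,
      hcross, hcross', hquad]
    ring
  rw [hLδ, hRHS]
  ring
end

section
/- Suppose Ŵ is positive definite and factor Ŵ = RᵀR with R an invertible N×N matrix; define X* := R X and y* := (Rᵀ)⁻¹ ŷ. Fix k ≤ p. Then a vector δ with ‖δ‖₀ ≤ k minimizes the expected Mahalanobis loss L over the constraint set {δ ∈ ℝ^p : ‖δ‖₀ ≤ k} if and only if it minimizes the least-squares objective δ ↦ ‖y* − X* δ‖² over the same constraint set. (This is the paper's Theorem 1: cardinality-constrained optimization of the expected Mahalanobis loss reduces to cardinality-constrained least squares on pseudo-data.) -/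
open MeasureTheory Matrix

/-- Theorem 1 of the paper: under the cardinality constraint ‖δ‖₀ ≤ k, minimizing the expected Mahalanobis loss is equivalent to minimizing the least-squares objective on the pseudo-data y* = (Rᵀ)⁻¹ŷ, X* = RX. -/
theorem stmt_4
    {S : Type*} [MeasurableSpace S] (μ : Measure S) [IsProbabilityMeasure μ]
    {N p : ℕ}
    (W : S → Matrix (Fin N) (Fin N) ℝ) (y : S → (Fin N → ℝ))
    (hWpsd : ∀ᵐ s ∂μ, (W s).PosSemidef)
    (hWint : ∀ i j, Integrable (fun s => W s i j) μ)
    (hWy : ∀ i, Integrable (fun s => (W s *ᵥ y s) i) μ)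
    (hyWy : Integrable (fun s => y s ⬝ᵥ (W s *ᵥ y s)) μ)
    (X : Matrix (Fin N) (Fin p) ℝ)
    (What : Matrix (Fin N) (Fin N) ℝ)
    (hWhat : ∀ i j, What i j = ∫ s, W s i j ∂μ)
    (yhat : Fin N → ℝ)
    (hyhat : ∀ i, yhat i = ∫ s, (W s *ᵥ y s) i ∂μ)
    (L : (Fin p → ℝ) → ℝ)
    (hL : ∀ δ : Fin p → ℝ, L δ = ∫ s, (y s - X *ᵥ δ) ⬝ᵥ (W s *ᵥ (y s - X *ᵥ δ)) ∂μ)    (hWpd : What.PosDef)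
    (R : Matrix (Fin N) (Fin N) ℝ)
    (hRunit : IsUnit R.det)
    (hRfac : Rᵀ * R = What)
    (Xstar : Matrix (Fin N) (Fin p) ℝ) (hXstar : Xstar = R * X)
    (ystar : Fin N → ℝ) (hystar : ystar = (Rᵀ)⁻¹ *ᵥ yhat)
    (k : ℕ) (hk : k ≤ p) :
    ∀ δ0 : Fin p → ℝ, (Finset.univ.filter fun j => δ0 j ≠ 0).card ≤ k →
      ((∀ δ : Fin p → ℝ, (Finset.univ.filter fun j => δ j ≠ 0).card ≤ k → L δ0 ≤ L δ) ↔
        (∀ δ : Fin p → ℝ, (Finset.univ.filter fun j => δ j ≠ 0).card ≤ k →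
          (ystar - Xstar *ᵥ δ0) ⬝ᵥ (ystar - Xstar *ᵥ δ0) ≤
            (ystar - Xstar *ᵥ δ) ⬝ᵥ (ystar - Xstar *ᵥ δ))) := by
  have hRT : IsUnit (Rᵀ).det := by rwa [det_transpose]
  have key : ∀ δ : Fin p → ℝ,
      L δ = (ystar - Xstar *ᵥ δ) ⬝ᵥ (ystar - Xstar *ᵥ δ) +
        ((∫ s, y s ⬝ᵥ (W s *ᵥ y s) ∂μ) - ystar ⬝ᵥ ystar) := by
    intro δ
    set c : Fin N → ℝ := X *ᵥ δ with hc
    -- cross term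
    have hcross_int : Integrable (fun s => c ⬝ᵥ (W s *ᵥ y s)) μ := by
      have he : (fun s => c ⬝ᵥ (W s *ᵥ y s)) = fun s => ∑ i, c i * (W s *ᵥ y s) i := rfl
      rw [he]
      exact integrable_finset_sum _ (fun i _ => (hWy i).const_mul _)
    have hcross_val : ∫ s, c ⬝ᵥ (W s *ᵥ y s) ∂μ = c ⬝ᵥ yhat := by
      have he : (fun s => c ⬝ᵥ (W s *ᵥ y s)) = fun s => ∑ i, c i * (W s *ᵥ y s) i := rfl
      rw [he, integral_finset_sum _ (fun i _ => (hWy i).const_mul _)]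
      simp only [integral_const_mul]
      simp [dotProduct, hyhat]
    -- quadratic term
    have heq : (fun s => c ⬝ᵥ (W s *ᵥ c)) = fun s => ∑ i, ∑ j, c i * W s i j * c j := by
      funext s
      simp [dotProduct, mulVec, Finset.mul_sum, mul_assoc]
    have hquad_int : Integrable (fun s => c ⬝ᵥ (W s *ᵥ c)) μ := by
      rw [heq]
      exact integrable_finset_sum _ (fun i _ => integrable_finset_sum _
        (fun j _ => ((hWint i j).const_mul (c i)).mul_const (c j)))
    have hquad_val : ∫ s, c ⬝ᵥ (W s *ᵥ c) ∂μ = c ⬝ᵥ (What *ᵥ c) := by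
      rw [heq, integral_finset_sum _ (fun i _ => integrable_finset_sum _
        (fun j _ => ((hWint i j).const_mul (c i)).mul_const (c j)))]
      have : ∀ i ∈ Finset.univ, (∫ s, ∑ j, c i * W s i j * c j ∂μ)
          = ∑ j, c i * What i j * c j := by
        intro i _
        rw [integral_finset_sum _ (fun j _ => ((hWint i j).const_mul (c i)).mul_const (c j))]
        refine Finset.sum_congr rfl fun j _ => ?_
        rw [hWhat]
        calc ∫ a, c i * W a i j * c j ∂μ = ∫ a, c i * (W a i j * c j) ∂μ := by
              simp [mul_assoc]
          _ = c i * ∫ a, W a i j * c j ∂μ := integral_const_mul _ _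
          _ = c i * ((∫ a, W a i j ∂μ) * c j) := by rw [integral_mul_const]
          _ = (c i * ∫ a, W a i j ∂μ) * c j := by ring
      rw [Finset.sum_congr rfl this]
      simp [dotProduct, mulVec, Finset.mul_sum, mul_assoc]
    -- pointwise expansion a.e.
    have hexp : ∀ᵐ s ∂μ, (y s - c) ⬝ᵥ (W s *ᵥ (y s - c)) =
        y s ⬝ᵥ (W s *ᵥ y s) - 2 * (c ⬝ᵥ (W s *ᵥ y s)) + c ⬝ᵥ (W s *ᵥ c) := by
      filter_upwards [hWpsd] with s hs
      have hsym : (W s)ᵀ = W s := hs.isHermitian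
      have hyc : y s ⬝ᵥ (W s *ᵥ c) = c ⬝ᵥ (W s *ᵥ y s) := by
        calc y s ⬝ᵥ (W s *ᵥ c) = (y s ᵥ* W s) ⬝ᵥ c := dotProduct_mulVec _ _ _
          _ = ((W s)ᵀ *ᵥ y s) ⬝ᵥ c := by rw [mulVec_transpose]
          _ = (W s *ᵥ y s) ⬝ᵥ c := by rw [hsym]
          _ = c ⬝ᵥ (W s *ᵥ y s) := dotProduct_comm _ _
      rw [sub_dotProduct, mulVec_sub, dotProduct_sub, dotProduct_sub, hyc]
      ring
    -- integrate
    have hi2 : Integrable (fun s => 2 * (c ⬝ᵥ (W s *ᵥ y s))) μ := hcross_int.const_mul 2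
    have hi1 : Integrable (fun s => y s ⬝ᵥ (W s *ᵥ y s) - 2 * (c ⬝ᵥ (W s *ᵥ y s))) μ :=
      hyWy.sub hi2
    have hLval : L δ = (∫ s, y s ⬝ᵥ (W s *ᵥ y s) ∂μ) - 2 * (c ⬝ᵥ yhat) + c ⬝ᵥ (What *ᵥ c) := by
      rw [hL, ← hc, integral_congr_ae hexp, integral_add hi1 hquad_int,
        integral_sub hyWy hi2, integral_const_mul, hcross_val, hquad_val]
    -- the least squares side
    have h1 : Xstar *ᵥ δ = R *ᵥ c := by rw [hXstar, hc, ← mulVec_mulVec]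
    have h2 : ystar ⬝ᵥ (R *ᵥ c) = yhat ⬝ᵥ c := by
      rw [hystar, dotProduct_mulVec, ← mulVec_transpose, mulVec_mulVec,
        Matrix.mul_nonsing_inv _ hRT, one_mulVec]
    have h3 : (R *ᵥ c) ⬝ᵥ (R *ᵥ c) = c ⬝ᵥ (What *ᵥ c) := by
      rw [dotProduct_mulVec, ← mulVec_transpose, mulVec_mulVec, hRfac, dotProduct_comm]
    have hQ : (ystar - Xstar *ᵥ δ) ⬝ᵥ (ystar - Xstar *ᵥ δ) =
        ystar ⬝ᵥ ystar - 2 * (c ⬝ᵥ yhat) + c ⬝ᵥ (What *ᵥ c) := by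
      rw [h1, sub_dotProduct, dotProduct_sub, dotProduct_sub, h2, h3,
        dotProduct_comm (R *ᵥ c) ystar, h2, dotProduct_comm yhat c]
      ring
    rw [hLval, hQ]
    ring
  intro δ0 hδ0
  constructor
  · intro h δ hδ
    have := h δ hδ
    rw [key δ0, key δ] at this
    linarith
  · intro h δ hδ
    have := h δ hδ
    rw [key δ0, key δ]
    linarith
end
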